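/- From the scaling substitution estimate one deduces, using the identity (∂_t − ∂_r)w = (2/(t−r))Sw − ((t+r)/(t−r))(∂_t+∂_r)w and the fact that (t+r)/(t−r) = O(1) on C̃^R_τ when R ≤ τ/4: ‖w‖_{L^∞(C^R_τ)} ≤ C ( (τ^{1/2}R^{3/2})^{-1} ‖Z^{≤4}w‖_{L²L²(C̃^R_τ)} + (τ^{1/2}R^{1/2})^{-1} ‖(∂_t+∂_r)Z^{≤3}w‖_{L²L²(C̃^R_τ)} ), assuming the weaker estimate ‖w‖_{L^∞(C^R_τ)} ≲ (τ^{1/2}R^{3/2})^{-1}‖Z^{≤3}w‖ + (τ^{1/2}R)^{-1}‖Z^{≤3}w‖^{1/2}‖∂_r Z^{≤3}w‖^{1/2} on the same region. -/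
import Mathlib


noncomputable section

set_option maxHeartbeats 2000000

open MeasureTheory

abbrev E3 := EuclideanSpace ℝ (Fin 3)
abbrev ST3 := ℝ × E3

def dtime (u : ST3 → ℝ) (p : ST3) : ℝ := fderiv ℝ u p (1, 0)

def dxi (i : Fin 3) (u : ST3 → ℝ) (p : ST3) : ℝ :=
  fderiv ℝ u p (0, EuclideanSpace.single i 1)

/-- The radial derivative `∂_r u = (x/r)·∇u`. -/
def radDeriv (u : ST3 → ℝ) (p : ST3) : ℝ :=
  ‖p.2‖⁻¹ * ∑ i : Fin 3, p.2 i * dxi i u p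

/-- The admissible vector fields `{id, ∂_t, ∂₁, ∂₂, ∂₃, Ω₁, Ω₂, Ω₃, S}` (identity included
so that words of a fixed length encode all shorter words). -/
def Zvf : Option (Unit ⊕ Fin 3 ⊕ Fin 3 ⊕ Unit) → (ST3 → ℝ) → ST3 → ℝ
  | none => fun u => u
  | some (Sum.inl _) => dtime
  | some (Sum.inr (Sum.inl i)) => dxi i
  | some (Sum.inr (Sum.inr (Sum.inl j))) => fun u p =>
      ![p.2 1 * dxi 2 u p - p.2 2 * dxi 1 u p,
        p.2 2 * dxi 0 u p - p.2 0 * dxi 2 u p,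
        p.2 0 * dxi 1 u p - p.2 1 * dxi 0 u p] j
  | some (Sum.inr (Sum.inr (Sum.inr _))) => fun u p =>
      p.1 * dtime u p + ∑ i : Fin 3, p.2 i * dxi i u p

/-- A word of at most three admissible vector fields applied to `u`. -/
def Zword (w : Fin 3 → Option (Unit ⊕ Fin 3 ⊕ Fin 3 ⊕ Unit)) (u : ST3 → ℝ) : ST3 → ℝ :=
  Zvf (w 0) (Zvf (w 1) (Zvf (w 2) u))

/-- The region `C^R_τ = {τ ≤ t ≤ 2τ, R < |x| < 2R, |x| ≤ t + 2}`. -/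
def CRreg (τ R : ℝ) : Set ST3 :=
  {p | τ ≤ p.1 ∧ p.1 ≤ 2 * τ ∧ R < ‖p.2‖ ∧ ‖p.2‖ < 2 * R ∧ ‖p.2‖ ≤ p.1 + 2}

/-- The enlarged region `C̃^R_τ`. -/
def CRregT (τ R : ℝ) : Set ST3 :=
  {p | 7 * τ / 8 ≤ p.1 ∧ p.1 ≤ 2 * τ ∧ 7 * R / 8 < ‖p.2‖ ∧ ‖p.2‖ < 17 * R / 8 ∧
    ‖p.2‖ ≤ p.1 + 2}


/-- A word of at most four admissible vector fields applied to `u`. -/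
def Zword4 (w : Fin 4 → Option (Unit ⊕ Fin 3 ⊕ Fin 3 ⊕ Unit)) (u : ST3 → ℝ) : ST3 → ℝ :=
  Zvf (w 0) (Zvf (w 1) (Zvf (w 2) (Zvf (w 3) u)))


abbrev OL := Option (Unit ⊕ Fin 3 ⊕ Fin 3 ⊕ Unit)

def sS : OL := some (Sum.inr (Sum.inr (Sum.inr ())))

lemma fderiv_apply_smooth (u : ST3 → ℝ) (hu : ContDiff ℝ (⊤ : ℕ∞) u) (v : ST3) :
    ContDiff ℝ (⊤ : ℕ∞) (fun p => fderiv ℝ u p v) :=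
  (ContinuousLinearMap.apply ℝ ℝ v).contDiff.comp (hu.fderiv_right (by simp))

lemma dtime_smooth {u : ST3 → ℝ} (hu : ContDiff ℝ (⊤ : ℕ∞) u) : ContDiff ℝ (⊤ : ℕ∞) (dtime u) :=
  fderiv_apply_smooth u hu _

lemma dxi_smooth (i : Fin 3) {u : ST3 → ℝ} (hu : ContDiff ℝ (⊤ : ℕ∞) u) : ContDiff ℝ (⊤ : ℕ∞) (dxi i u) :=
  fderiv_apply_smooth u hu _

lemma coord_smooth (i : Fin 3) : ContDiff ℝ (⊤ : ℕ∞) (fun p : ST3 => p.2 i) :=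
  ((EuclideanSpace.proj (𝕜 := ℝ) i).contDiff).comp contDiff_snd

lemma zvf_smooth (o : OL) {u : ST3 → ℝ}
    (hu : ContDiff ℝ (⊤ : ℕ∞) u) : ContDiff ℝ (⊤ : ℕ∞) (Zvf o u) := by
  match o with
  | none => exact hu
  | some (Sum.inl _) => exact dtime_smooth hu
  | some (Sum.inr (Sum.inl i)) => exact dxi_smooth i hu
  | some (Sum.inr (Sum.inr (Sum.inl j))) =>
      fin_cases j <;> simp only [Zvf, Matrix.cons_val_zero, Matrix.cons_val_one, Matrix.head_cons,
        Matrix.cons_val_two, Matrix.tail_cons] <;>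
      exact ((coord_smooth _).mul (dxi_smooth _ hu)).sub ((coord_smooth _).mul (dxi_smooth _ hu))
  | some (Sum.inr (Sum.inr (Sum.inr _))) =>
      exact (contDiff_fst.mul (dtime_smooth hu)).add
        (ContDiff.sum fun i _ => (coord_smooth i).mul (dxi_smooth i hu))

lemma zword_smooth (w : Fin 3 → OL) {u : ST3 → ℝ} (hu : ContDiff ℝ (⊤ : ℕ∞) u) :
    ContDiff ℝ (⊤ : ℕ∞) (Zword w u) :=
  zvf_smooth _ (zvf_smooth _ (zvf_smooth _ hu))

def Kset (τ R : ℝ) : Set ST3 :=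
  {p | |p.1| ≤ 2 * τ ∧ 7 * R / 8 ≤ ‖p.2‖ ∧ ‖p.2‖ ≤ 17 * R / 8}

lemma measurableSet_CRregT (τ R : ℝ) : MeasurableSet (CRregT τ R) := by
  have h1 : Measurable fun p : ST3 => p.1 := measurable_fst
  have h2 : Measurable fun p : ST3 => ‖p.2‖ := (continuous_norm.comp continuous_snd).measurable
  exact (measurableSet_le measurable_const h1).inter
    ((measurableSet_le h1 measurable_const).inter
      ((measurableSet_lt measurable_const h2).inter
        ((measurableSet_lt h2 measurable_const).inter
          (measurableSet_le h2 (h1.add measurable_const)))))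

lemma isCompact_Kset (τ R : ℝ) : IsCompact (Kset τ R) := by
  have hclosed : IsClosed (Kset τ R) := by
    have h1 : Continuous fun p : ST3 => |p.1| := continuous_fst.abs
    have h2 : Continuous fun p : ST3 => ‖p.2‖ := continuous_norm.comp continuous_snd
    exact (isClosed_le h1 continuous_const).inter
      ((isClosed_le continuous_const h2).inter (isClosed_le h2 continuous_const))
  have hbdd : Bornology.IsBounded (Kset τ R) := by
    apply (Metric.isBounded_closedBall (x := (0 : ST3)) (r := |2*τ| + |17*R/8|)).subset
    intro p hp
    obtain ⟨h1, _, h3⟩ := hp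
    simp only [Metric.mem_closedBall, dist_zero_right, Prod.norm_def]
    rw [max_le_iff]
    have e1 : (2*τ ≤ |2*τ| + |17*R/8|) := by
      have := le_abs_self (2*τ); have := abs_nonneg (17*R/8); linarith
    have e2 : (17*R/8 ≤ |2*τ| + |17*R/8|) := by
      have := le_abs_self (17*R/8); have := abs_nonneg (2*τ); linarith
    exact ⟨le_trans h1 e1, le_trans h3 e2⟩
  exact Metric.isCompact_of_isClosed_isBounded hclosed hbdd

lemma CRregT_subset_Kset (τ R : ℝ) (hR : 1 ≤ R) (hτR : R ≤ τ / 4) :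
    CRregT τ R ⊆ Kset τ R := by
  intro p hp
  obtain ⟨h1, h2, h3, h4, _⟩ := hp
  have hτ : 0 < τ := by linarith
  refine ⟨?_, le_of_lt h3, le_of_lt h4⟩
  rw [abs_le]; constructor <;> nlinarith

lemma integrableOn_CRregT (τ R : ℝ) (hR : 1 ≤ R) (hτR : R ≤ τ / 4) (f : ST3 → ℝ)
    (hf : ContinuousOn f (Kset τ R)) : IntegrableOn f (CRregT τ R) :=
  (hf.integrableOn_compact (isCompact_Kset τ R)).mono_set (CRregT_subset_Kset τ R hR hτR)

lemma radDeriv_identity (v : ST3 → ℝ) (p : ST3) (hp : ‖p.2‖ ≠ 0) :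
    (p.1 - ‖p.2‖) * radDeriv v p
      = p.1 * (dtime v p + radDeriv v p) - Zvf sS v p := by
  simp only [Zvf, radDeriv, sS]
  field_simp
  ring

lemma continuousOn_radDeriv (τ R : ℝ) (hR : 1 ≤ R) {v : ST3 → ℝ} (hv : ContDiff ℝ (⊤ : ℕ∞) v) :
    ContinuousOn (radDeriv v) (Kset τ R) := by
  have hsum : Continuous fun p : ST3 => ∑ i : Fin 3, p.2 i * dxi i v p :=
    continuous_finset_sum _ fun i _ => ((coord_smooth i).continuous).mul (dxi_smooth i hv).continuous
  have hne : ∀ p ∈ Kset τ R, ‖p.2‖ ≠ 0 := by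
    intro p hp
    have h := hp.2.1
    have : (0:ℝ) < 7 * R / 8 := by linarith
    exact ne_of_gt (lt_of_lt_of_le this h)
  exact (((continuous_norm.comp continuous_snd).continuousOn).inv₀ hne).mul hsum.continuousOn

lemma sqrt_add_le' (a b : ℝ) (ha : 0 ≤ a) (hb : 0 ≤ b) :
    Real.sqrt (a + b) ≤ Real.sqrt a + Real.sqrt b := by
  have h : a + b ≤ (Real.sqrt a + Real.sqrt b)^2 := by
    nlinarith [Real.sq_sqrt ha, Real.sq_sqrt hb, Real.sqrt_nonneg a, Real.sqrt_nonneg b]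
  calc Real.sqrt (a + b) ≤ Real.sqrt ((Real.sqrt a + Real.sqrt b)^2) := Real.sqrt_le_sqrt h
    _ = _ := Real.sqrt_sq (by positivity)

lemma word_bound (τ R : ℝ) (hR : 1 ≤ R) (hτR : R ≤ τ / 4) (v : ST3 → ℝ) (hv : ContDiff ℝ (⊤ : ℕ∞) v) :
    Real.sqrt (∫ q in CRregT τ R, (radDeriv v q)^2)
      ≤ 12 * Real.sqrt (∫ q in CRregT τ R, (dtime v q + radDeriv v q)^2)
        + (6/τ) * Real.sqrt (∫ q in CRregT τ R, (Zvf sS v q)^2) := by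
  have hτ : (0:ℝ) < τ := by linarith
  have hIrad : IntegrableOn (fun q => (radDeriv v q)^2) (CRregT τ R) :=
    integrableOn_CRregT τ R hR hτR _ ((continuousOn_radDeriv τ R hR hv).pow 2)
  have hIg : IntegrableOn (fun q => (dtime v q + radDeriv v q)^2) (CRregT τ R) :=
    integrableOn_CRregT τ R hR hτR _
      ((((dtime_smooth hv).continuous.continuousOn).add (continuousOn_radDeriv τ R hR hv)).pow 2)
  have hIS : IntegrableOn (fun q => (Zvf sS v q)^2) (CRregT τ R) :=
    integrableOn_CRregT τ R hR hτR _ (((zvf_smooth sS hv).continuous.pow 2).continuousOn)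
  have hpt : ∀ q ∈ CRregT τ R,
      (radDeriv v q)^2 ≤ 128*(dtime v q + radDeriv v q)^2 + 32/τ^2*(Zvf sS v q)^2 := by
    intro q hq
    obtain ⟨h1, h2, h3, h4, _⟩ := hq
    have hr0 : ‖q.2‖ ≠ 0 := by
      have : (0:ℝ) < 7 * R / 8 := by linarith
      exact ne_of_gt (lt_trans this h3)
    have hid := radDeriv_identity v q hr0
    set t := q.1 with htdef; set r := ‖q.2‖ with hrdef
    set D := radDeriv v q with hD; set S := Zvf sS v q with hS
    set G := dtime v q + radDeriv v q with hG
    have htr : τ/4 ≤ t - r := by nlinarith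
    have ht0 : 0 ≤ t := by linarith
    have hτ2 : (0:ℝ) < τ^2 := by positivity
    have e1 : ((t - r)*D)^2 = (t*G - S)^2 := by rw [hid]
    have e2 : (t*G - S)^2 ≤ 8*τ^2*G^2 + 2*S^2 := by
      nlinarith [sq_nonneg (t*G + S),
        mul_le_mul_of_nonneg_right (show t^2 ≤ 4*τ^2 by nlinarith) (sq_nonneg G)]
    have e3 : τ^2/16 ≤ (t - r)^2 := by nlinarith
    have e4 : D^2 * (τ^2/16) ≤ D^2 * (t - r)^2 :=
      mul_le_mul_of_nonneg_left e3 (sq_nonneg D)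
    have key : D^2 * τ^2 ≤ 128*G^2*τ^2 + 32*S^2 := by nlinarith [e1, e2, e4]
    have h5 : D^2 ≤ (128*G^2*τ^2 + 32*S^2)/τ^2 := (le_div_iff₀ hτ2).mpr key
    calc D^2 ≤ (128*G^2*τ^2 + 32*S^2)/τ^2 := h5
      _ = 128*G^2 + 32/τ^2*S^2 := by field_simp
  have hint : ∫ q in CRregT τ R, (radDeriv v q)^2
      ≤ 128*(∫ q in CRregT τ R, (dtime v q + radDeriv v q)^2)
        + 32/τ^2*(∫ q in CRregT τ R, (Zvf sS v q)^2) := by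
    have h := setIntegral_mono_on hIrad ((hIg.const_mul 128).add (hIS.const_mul (32/τ^2)))
      (measurableSet_CRregT τ R) hpt
    simp only [Pi.add_apply] at h
    rwa [integral_add (hIg.const_mul 128) (hIS.const_mul (32/τ^2)),
      integral_const_mul, integral_const_mul] at h
  set Ig := ∫ q in CRregT τ R, (dtime v q + radDeriv v q)^2 with hIgdef
  set Is := ∫ q in CRregT τ R, (Zvf sS v q)^2 with hIsdef
  have hIg0 : 0 ≤ Ig := setIntegral_nonneg (measurableSet_CRregT τ R) (fun q _ => sq_nonneg _)
  have hIs0 : 0 ≤ Is := setIntegral_nonneg (measurableSet_CRregT τ R) (fun q _ => sq_nonneg _)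
  have s1 : Real.sqrt (128*Ig) ≤ 12 * Real.sqrt Ig := by
    rw [Real.sqrt_mul (by norm_num) Ig]
    have h12 : Real.sqrt 128 ≤ 12 := by
      rw [show (12:ℝ) = Real.sqrt (12^2) from (Real.sqrt_sq (by norm_num)).symm]
      exact Real.sqrt_le_sqrt (by norm_num)
    exact mul_le_mul_of_nonneg_right h12 (Real.sqrt_nonneg _)
  have s2 : Real.sqrt (32/τ^2*Is) ≤ (6/τ) * Real.sqrt Is := by
    rw [Real.sqrt_mul (by positivity) Is]
    have h62 : Real.sqrt (32/τ^2) ≤ 6/τ := by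
      rw [show (6/τ : ℝ) = Real.sqrt ((6/τ)^2) from (Real.sqrt_sq (by positivity)).symm]
      apply Real.sqrt_le_sqrt
      rw [div_pow]
      gcongr
      norm_num
    exact mul_le_mul_of_nonneg_right h62 (Real.sqrt_nonneg _)
  calc Real.sqrt (∫ q in CRregT τ R, (radDeriv v q)^2)
      ≤ Real.sqrt (128*Ig + 32/τ^2*Is) := Real.sqrt_le_sqrt hint
    _ ≤ Real.sqrt (128*Ig) + Real.sqrt (32/τ^2*Is) :=
        sqrt_add_le' _ _ (by positivity) (by positivity)
    _ ≤ 12 * Real.sqrt Ig + (6/τ) * Real.sqrt Is := add_le_add s1 s2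

def ext0 : (Fin 3 → OL) → (Fin 4 → OL) := fun w => ![w 0, w 1, w 2, none]
def extS : (Fin 3 → OL) → (Fin 4 → OL) := fun w => ![sS, w 0, w 1, w 2]

lemma Zword4_ext0 (w : Fin 3 → OL) (u : ST3 → ℝ) : Zword4 (ext0 w) u = Zword w u := rfl
lemma Zword4_extS (w : Fin 3 → OL) (u : ST3 → ℝ) :
    Zword4 (extS w) u = Zvf sS (Zword w u) := rfl

lemma ext0_inj : Function.Injective ext0 := by
  intro a b h
  funext i
  fin_cases i
  · exact congrFun h 0
  · exact congrFun h 1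
  · exact congrFun h 2

lemma extS_inj : Function.Injective extS := by
  intro a b h
  funext i
  fin_cases i
  · exact congrFun h 1
  · exact congrFun h 2
  · exact congrFun h 3

lemma sum_comp_le (f : (Fin 4 → OL) → ℝ) (hf : ∀ w, 0 ≤ f w)
    (e : (Fin 3 → OL) → (Fin 4 → OL)) (he : Function.Injective e) :
    ∑ w : Fin 3 → OL, f (e w) ≤ ∑ w : Fin 4 → OL, f w := by
  classical
  rw [← Finset.sum_image (g := e) (f := f) (fun a _ b _ h => he h)]
  exact Finset.sum_le_sum_of_subset_of_nonneg (Finset.subset_univ _) (fun i _ _ => hf i)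

/-- Assuming the weaker Klainerman–Sobolev bound with constant `C₁`, using
`(∂_t − ∂_r)w = (2/(t−r))Sw − ((t+r)/(t−r))(∂_t+∂_r)w` and `(t+r)/(t−r) = O(1)` on
`C̃^R_τ` for `R ≤ τ/4`, one deduces
`‖w‖_{L^∞(C^R_τ)} ≤ C₂((τ^{1/2}R^{3/2})⁻¹‖Z^{≤4}w‖ + (τ^{1/2}R^{1/2})⁻¹‖(∂_t+∂_r)Z^{≤3}w‖)`. -/
theorem ks_bound_CR_good_derivative (C₁ : ℝ) (hC₁ : 0 < C₁) :
    ∃ C₂ > 0, ∀ τ R : ℝ, 1 ≤ R → R ≤ τ / 4 → ∀ u : ST3 → ℝ, ContDiff ℝ (⊤ : ℕ∞) u →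
      (∀ p ∈ CRreg τ R,
        |u p| ≤ C₁ * ((Real.sqrt (τ * R ^ 3))⁻¹ *
              (∑ w : Fin 3 → Option (Unit ⊕ Fin 3 ⊕ Fin 3 ⊕ Unit),
                Real.sqrt (∫ q in CRregT τ R, (Zword w u q) ^ 2)) +
            (Real.sqrt τ * R)⁻¹ *
              Real.sqrt (∑ w : Fin 3 → Option (Unit ⊕ Fin 3 ⊕ Fin 3 ⊕ Unit),
                  Real.sqrt (∫ q in CRregT τ R, (Zword w u q) ^ 2)) *
              Real.sqrt (∑ w : Fin 3 → Option (Unit ⊕ Fin 3 ⊕ Fin 3 ⊕ Unit),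
                  Real.sqrt (∫ q in CRregT τ R, (radDeriv (Zword w u) q) ^ 2)))) →
      ∀ p ∈ CRreg τ R,
        |u p| ≤ C₂ * ((Real.sqrt τ * Real.sqrt (R ^ 3))⁻¹ *
              (∑ w : Fin 4 → Option (Unit ⊕ Fin 3 ⊕ Fin 3 ⊕ Unit),
                Real.sqrt (∫ q in CRregT τ R, (Zword4 w u q) ^ 2)) +
            (Real.sqrt τ * Real.sqrt R)⁻¹ *
              (∑ w : Fin 3 → Option (Unit ⊕ Fin 3 ⊕ Fin 3 ⊕ Unit),
                Real.sqrt (∫ q in CRregT τ R,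
                  (dtime (Zword w u) q + radDeriv (Zword w u) q) ^ 2))) := by
  classical
  refine ⟨5 * C₁, by positivity, ?_⟩
  intro τ R hR hτR u hu H p hp
  have hτ0 : (0:ℝ) < τ := by linarith
  have hR0 : (0:ℝ) < R := by linarith
  set A := ∑ w : Fin 3 → Option (Unit ⊕ Fin 3 ⊕ Fin 3 ⊕ Unit),
      Real.sqrt (∫ q in CRregT τ R, (Zword w u q) ^ 2) with hAdef
  set B := ∑ w : Fin 3 → Option (Unit ⊕ Fin 3 ⊕ Fin 3 ⊕ Unit),
      Real.sqrt (∫ q in CRregT τ R, (radDeriv (Zword w u) q) ^ 2) with hBdef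
  set G := ∑ w : Fin 3 → Option (Unit ⊕ Fin 3 ⊕ Fin 3 ⊕ Unit),
      Real.sqrt (∫ q in CRregT τ R,
        (dtime (Zword w u) q + radDeriv (Zword w u) q) ^ 2) with hGdef
  set A4 := ∑ w : Fin 4 → Option (Unit ⊕ Fin 3 ⊕ Fin 3 ⊕ Unit),
      Real.sqrt (∫ q in CRregT τ R, (Zword4 w u q) ^ 2) with hA4def
  have HP := H p hp
  have h0A : 0 ≤ A := Finset.sum_nonneg fun w _ => Real.sqrt_nonneg _
  have h0B : 0 ≤ B := Finset.sum_nonneg fun w _ => Real.sqrt_nonneg _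
  have h0G : 0 ≤ G := Finset.sum_nonneg fun w _ => Real.sqrt_nonneg _
  have h0A4 : 0 ≤ A4 := Finset.sum_nonneg fun w _ => Real.sqrt_nonneg _
  -- `A ≤ A4`
  have hAA4 : A ≤ A4 := by
    rw [hAdef, hA4def]
    have h := sum_comp_le (fun w' => Real.sqrt (∫ q in CRregT τ R, (Zword4 w' u q) ^ 2))
      (fun _ => Real.sqrt_nonneg _) ext0 ext0_inj
    simp only [Zword4_ext0] at h
    exact h
  -- sum of S-extended words is `≤ A4`
  have hSA4 : (∑ w : Fin 3 → OL,
      Real.sqrt (∫ q in CRregT τ R, (Zvf sS (Zword w u) q) ^ 2)) ≤ A4 := by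
    rw [hA4def]
    have h := sum_comp_le (fun w' => Real.sqrt (∫ q in CRregT τ R, (Zword4 w' u q) ^ 2))
      (fun _ => Real.sqrt_nonneg _) extS extS_inj
    simp only [Zword4_extS] at h
    exact h
  -- `B ≤ 12 G + (6/τ) A4`
  have hBb : B ≤ 12 * G + (6/τ) * A4 := by
    have h1 : B ≤ ∑ w : Fin 3 → OL,
        (12 * Real.sqrt (∫ q in CRregT τ R,
            (dtime (Zword w u) q + radDeriv (Zword w u) q) ^ 2)
          + (6/τ) * Real.sqrt (∫ q in CRregT τ R, (Zvf sS (Zword w u) q) ^ 2)) := by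
      rw [hBdef]
      exact Finset.sum_le_sum fun w _ =>
        word_bound τ R hR hτR (Zword w u) (zword_smooth w hu)
    rw [Finset.sum_add_distrib, ← Finset.mul_sum, ← Finset.mul_sum] at h1
    have h2 : (6/τ) * (∑ w : Fin 3 → OL,
        Real.sqrt (∫ q in CRregT τ R, (Zvf sS (Zword w u) q) ^ 2))
          ≤ (6/τ) * A4 :=
      mul_le_mul_of_nonneg_left hSA4 (by positivity)
    rw [hGdef]
    linarith
  -- abbreviations for square roots
  set s := Real.sqrt τ with hsdef
  set c := Real.sqrt R with hcdef
  have hs0 : 0 < s := Real.sqrt_pos.mpr hτ0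
  have hc0 : 0 < c := Real.sqrt_pos.mpr hR0
  have hs2 : s ^ 2 = τ := Real.sq_sqrt hτ0.le
  have hc2 : c ^ 2 = R := Real.sq_sqrt hR0.le
  have hsc : 2 * c ≤ s := by
    have h4 : Real.sqrt (4 * R) ≤ s := Real.sqrt_le_sqrt (by linarith)
    have h4' : Real.sqrt (4 * R) = 2 * c := by
      rw [Real.sqrt_mul (by norm_num) R,
        show (4:ℝ) = 2 ^ 2 by norm_num, Real.sqrt_sq (by norm_num)]
    linarith [h4, h4'.symm.le]
  have hcR3 : Real.sqrt (R ^ 3) = c ^ 3 := by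
    rw [show R ^ 3 = (c ^ 3) ^ 2 by rw [← hc2]; ring, Real.sqrt_sq (by positivity)]
  have hτR3 : Real.sqrt (τ * R ^ 3) = s * c ^ 3 := by
    rw [Real.sqrt_mul hτ0.le, hcR3]
  -- bound on `√B`
  have hsqB : Real.sqrt B ≤ 4 * Real.sqrt G + (3/s) * Real.sqrt A4 := by
    have h1 : Real.sqrt B ≤ Real.sqrt (12 * G + (6/τ) * A4) := Real.sqrt_le_sqrt hBb
    have h2 : Real.sqrt (12 * G + (6/τ) * A4)
        ≤ Real.sqrt (12 * G) + Real.sqrt ((6/τ) * A4) :=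
      sqrt_add_le' _ _ (by linarith) (mul_nonneg (by positivity) h0A4)
    have h3 : Real.sqrt (12 * G) ≤ 4 * Real.sqrt G := by
      rw [Real.sqrt_mul (by norm_num) G]
      have h12 : Real.sqrt 12 ≤ 4 := by
        rw [show (4:ℝ) = Real.sqrt (4 ^ 2) from (Real.sqrt_sq (by norm_num)).symm]
        exact Real.sqrt_le_sqrt (by norm_num)
      exact mul_le_mul_of_nonneg_right h12 (Real.sqrt_nonneg _)
    have h4 : Real.sqrt ((6/τ) * A4) ≤ (3/s) * Real.sqrt A4 := by
      rw [Real.sqrt_mul (by positivity) A4]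
      have h6 : Real.sqrt (6/τ) ≤ 3/s := by
        rw [show (3/s : ℝ) = Real.sqrt ((3/s) ^ 2) from
          (Real.sqrt_sq (by positivity)).symm]
        apply Real.sqrt_le_sqrt
        rw [div_pow, hs2]
        gcongr
        norm_num
      exact mul_le_mul_of_nonneg_right h6 (Real.sqrt_nonneg _)
    linarith
  -- core inequality
  have fd : Real.sqrt A4 * Real.sqrt A4 = A4 := Real.mul_self_sqrt h0A4
  have ff : 2 * c * (Real.sqrt A4 * Real.sqrt G) ≤ A4 + c ^ 2 * G := by
    have hG' : Real.sqrt G * Real.sqrt G = G := Real.mul_self_sqrt h0G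
    nlinarith [sq_nonneg (Real.sqrt A4 - c * Real.sqrt G)]
  have step1 : c * (Real.sqrt A * Real.sqrt B)
      ≤ c * (Real.sqrt A4 * (4 * Real.sqrt G + (3/s) * Real.sqrt A4)) := by
    apply mul_le_mul_of_nonneg_left _ hc0.le
    exact mul_le_mul (Real.sqrt_le_sqrt hAA4) hsqB (Real.sqrt_nonneg B)
      (Real.sqrt_nonneg A4)
  have step2 : c * (Real.sqrt A4 * (4 * Real.sqrt G + (3/s) * Real.sqrt A4))
      = 4 * c * (Real.sqrt A4 * Real.sqrt G) + 3 * (c/s) * A4 := by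
    have e : c * (Real.sqrt A4 * (4 * Real.sqrt G + (3/s) * Real.sqrt A4))
        = 4 * c * (Real.sqrt A4 * Real.sqrt G)
          + 3 * (c/s) * (Real.sqrt A4 * Real.sqrt A4) := by ring
    rw [e, fd]
  have step3 : 3 * (c/s) * A4 ≤ (3/2) * A4 := by
    apply mul_le_mul_of_nonneg_right _ h0A4
    have hcs : c/s ≤ 1/2 := (div_le_iff₀ hs0).mpr (by linarith)
    linarith
  have hc2G : (0:ℝ) ≤ c ^ 2 * G := mul_nonneg (by positivity) h0G
  have core : A + c * (Real.sqrt A * Real.sqrt B) ≤ 5 * (A4 + c ^ 2 * G) := by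
    nlinarith [step1, step2, step3, ff, hAA4, h0A4, hc2G]
  -- reduce goal and hypothesis to the core inequality
  have hfinal : (Real.sqrt (τ * R ^ 3))⁻¹ * A + (s * R)⁻¹ * Real.sqrt A * Real.sqrt B
      ≤ 5 * ((s * c ^ 3)⁻¹ * A4 + (s * c)⁻¹ * G) := by
    rw [hτR3, ← hc2]
    have e1 : (s * c ^ 3)⁻¹ * A + (s * c ^ 2)⁻¹ * Real.sqrt A * Real.sqrt B
        = (A + c * (Real.sqrt A * Real.sqrt B)) / (s * c ^ 3) := by
      field_simp
      try ring
    have e2 : 5 * ((s * c ^ 3)⁻¹ * A4 + (s * c)⁻¹ * G)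
        = 5 * (A4 + c ^ 2 * G) / (s * c ^ 3) := by
      field_simp
      try ring
    rw [e1, e2]
    gcongr
  rw [hcR3]
  calc |u p| ≤ C₁ * ((Real.sqrt (τ * R ^ 3))⁻¹ * A
        + (s * R)⁻¹ * Real.sqrt A * Real.sqrt B) := HP
    _ ≤ C₁ * (5 * ((s * c ^ 3)⁻¹ * A4 + (s * c)⁻¹ * G)) :=
        mul_le_mul_of_nonneg_left hfinal hC₁.le
    _ = 5 * C₁ * ((s * c ^ 3)⁻¹ * A4 + (s * c)⁻¹ * G) := by ring
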